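/- For every real p with 0 ≤ p ≤ 1, the network-wide expected one-step reduction of the squared consensus error under sample greedy gossip is sandwiched between that of randomised gossip and that of greedy gossip: (1/(2N))·Σ_{s∈V} (1/d_s)·Σ_{t∈N(s)} (a(s)−a(t))² ≤ (1/(2N))·Σ_{s∈V} f_s(p) ≤ (1/(2N))·Σ_{s∈V} max_{t∈N(s)} (a(s)−a(t))². -/

import Mathlib

open Finset

/-- Maximum of a real-valued function over a finite set (0 on the empty set). -/
noncomputable def finsetMax {α : Type*} (x : α → ℝ) (S : Finset α) : ℝ :=
  if h : S.Nonempty then S.sup' h x else 0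

/-- `sggProgress G a s p` is `f_s(p)`: the conditional expectation of the squared
discrepancy `(a s - a t*)²` of the communication partner `t*` chosen by one step of
sample greedy gossip at node `s` with node activation probability `p`. -/
noncomputable def sggProgress {V : Type*} [Fintype V] [DecidableEq V]
    (G : SimpleGraph V) [DecidableRel G.Adj] (a : V → ℝ) (s : V) (p : ℝ) : ℝ :=
  (∑ m ∈ Finset.Icc 1 (G.neighborFinset s).card,
      p ^ m * (1 - p) ^ ((G.neighborFinset s).card - m) *
        ∑ S ∈ (G.neighborFinset s).powersetCard m,
          finsetMax (fun t => (a s - a t) ^ 2) S)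
    + (1 - p) ^ (G.neighborFinset s).card * (1 / ((G.neighborFinset s).card : ℝ)) *
        ∑ t ∈ G.neighborFinset s, (a s - a t) ^ 2

lemma binom_split (p : ℝ) (d : ℕ) :
    ∑ m ∈ Finset.Icc 1 d, p ^ m * (1 - p) ^ (d - m) * (d.choose m : ℝ) + (1 - p) ^ d = 1 := by
  have h := add_pow p (1 - p) d
  rw [add_sub_cancel, one_pow] at h
  rw [Finset.range_eq_Ico, Finset.sum_eq_sum_Ico_succ_bot (Nat.succ_pos d),
    Nat.succ_eq_add_one, Finset.Ico_add_one_right_eq_Icc] at h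
  simp only [pow_zero, Nat.sub_zero, Nat.choose_zero_right, Nat.cast_one, one_mul, mul_one] at h
  linarith [h]

lemma card_filter_mem_powersetCard {α : Type*} [DecidableEq α] (N : Finset α) (m : ℕ)
    (t : α) (ht : t ∈ N) :
    ((N.powersetCard (m+1)).filter (fun S => t ∈ S)).card = (N.card - 1).choose m := by
  rw [← Finset.card_erase_of_mem ht, ← Finset.card_powersetCard]
  apply Finset.card_bij (fun S _ => S.erase t)
  · intro S hS
    simp only [mem_filter, mem_powersetCard] at hS
    rw [mem_powersetCard]
    exact ⟨erase_subset_erase t hS.1.1, by rw [card_erase_of_mem hS.2, hS.1.2]; rfl⟩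
  · intro S hS S' hS' h
    simp only [mem_filter] at hS hS'
    rw [← insert_erase hS.2, ← insert_erase hS'.2, h]
  · intro S hS
    rw [mem_powersetCard] at hS
    refine ⟨insert t S, ?_, ?_⟩
    · simp only [mem_filter, mem_powersetCard]
      have htS : t ∉ S := fun h => (mem_erase.1 (hS.1 h)).1 rfl
      refine ⟨⟨insert_subset ht (hS.1.trans (erase_subset t N)), ?_⟩, mem_insert_self t S⟩
      rw [card_insert_of_notMem htS, hS.2]
    · rw [erase_insert (fun h => (mem_erase.1 (hS.1 h)).1 rfl)]

lemma sum_powersetCard_sum {α : Type*} [DecidableEq α] (N : Finset α) (m : ℕ) (g : α → ℝ) :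
    ∑ S ∈ N.powersetCard (m+1), ∑ t ∈ S, g t
      = ((N.card - 1).choose m : ℝ) * ∑ t ∈ N, g t := by
  have h1 : ∀ S ∈ N.powersetCard (m+1), ∑ t ∈ S, g t = ∑ t ∈ N, if t ∈ S then g t else 0 := by
    intro S hS
    rw [mem_powersetCard] at hS
    rw [← Finset.sum_filter, Finset.filter_mem_eq_inter, Finset.inter_eq_right.2 hS.1]
  rw [Finset.sum_congr rfl h1, Finset.sum_comm]
  rw [Finset.mul_sum]
  refine Finset.sum_congr rfl fun t ht => ?_
  rw [← Finset.sum_filter, Finset.sum_const, nsmul_eq_mul,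
    card_filter_mem_powersetCard N m t ht]

lemma choose_avg_le_sum_max {α : Type*} [DecidableEq α] (N : Finset α) (g : α → ℝ)
    (hg : ∀ t ∈ N, 0 ≤ g t) (k : ℕ) (hk : k + 1 ≤ N.card) :
    ((N.card.choose (k+1)) : ℝ) * ((1 / (N.card : ℝ)) * ∑ t ∈ N, g t)
      ≤ ∑ S ∈ N.powersetCard (k+1), finsetMax g S := by
  have hd0 : 0 < N.card := lt_of_lt_of_le (Nat.succ_pos k) hk
  have hgsum : 0 ≤ ∑ t ∈ N, g t := Finset.sum_nonneg hg
  have step1 : ∀ S ∈ N.powersetCard (k+1),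
      (1 / ((k:ℝ)+1)) * ∑ t ∈ S, g t ≤ finsetMax g S := by
    intro S hS
    rw [mem_powersetCard] at hS
    have hSne : S.Nonempty := Finset.card_pos.1 (hS.2 ▸ Nat.succ_pos k)
    rw [finsetMax, dif_pos hSne]
    have hsum : ∑ t ∈ S, g t ≤ S.card • S.sup' hSne g :=
      Finset.sum_le_card_nsmul S g _ (fun t ht => Finset.le_sup' g ht)
    rw [hS.2, nsmul_eq_mul] at hsum
    have : (0:ℝ) < (k:ℝ) + 1 := by positivity
    rw [div_mul_eq_mul_div, one_mul, div_le_iff₀ this]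
    push_cast at hsum
    linarith [hsum]
  calc ((N.card.choose (k+1)) : ℝ) * ((1 / (N.card : ℝ)) * ∑ t ∈ N, g t)
      = (1 / ((k:ℝ)+1)) * (((N.card - 1).choose k : ℝ) * ∑ t ∈ N, g t) := by
        obtain ⟨e, he⟩ : ∃ e, N.card = e + 1 := ⟨N.card - 1, (Nat.succ_pred_eq_of_pos hd0).symm⟩
        rw [he]
        have hnat : (e + 1) * e.choose k = (e+1).choose (k+1) * (k+1) := Nat.add_one_mul_choose_eq e k
        have hcast : ((e:ℝ) + 1) * (e.choose k : ℝ) = ((e+1).choose (k+1) : ℝ) * ((k:ℝ)+1) := by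
          exact_mod_cast hnat
        have h1 : ((k:ℝ)+1) ≠ 0 := by positivity
        have h2 : ((e:ℝ)+1) ≠ 0 := by positivity
        simp only [Nat.add_sub_cancel, Nat.cast_add, Nat.cast_one]
        field_simp
        ring_nf
        ring_nf at hcast
        nlinarith [hcast]
    _ ≤ (1 / ((k:ℝ)+1)) * ∑ S ∈ N.powersetCard (k+1), ∑ t ∈ S, g t := by
        rw [sum_powersetCard_sum]
    _ = ∑ S ∈ N.powersetCard (k+1), (1 / ((k:ℝ)+1)) * ∑ t ∈ S, g t := by rw [Finset.mul_sum]
    _ ≤ ∑ S ∈ N.powersetCard (k+1), finsetMax g S := Finset.sum_le_sum step1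

lemma sum_max_le_choose_max {α : Type*} [DecidableEq α] (N : Finset α) (hN : N.Nonempty)
    (g : α → ℝ) (k : ℕ) :
    ∑ S ∈ N.powersetCard (k+1), finsetMax g S
      ≤ ((N.card.choose (k+1)) : ℝ) * N.sup' hN g := by
  have := Finset.sum_le_card_nsmul (N.powersetCard (k+1)) (finsetMax g) (N.sup' hN g) ?_
  · rwa [Finset.card_powersetCard, nsmul_eq_mul] at this
  intro S hS
  rw [mem_powersetCard] at hS
  rcases Finset.eq_empty_or_nonempty S with rfl | hSne
  · exact absurd hS.2 (by simp)
  · rw [finsetMax, dif_pos hSne]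
    exact Finset.sup'_le hSne g fun t ht => Finset.le_sup' g (hS.1 ht)

lemma avg_le_sup {α : Type*} (N : Finset α) (hN : N.Nonempty) (g : α → ℝ) :
    (1 / (N.card : ℝ)) * ∑ t ∈ N, g t ≤ N.sup' hN g := by
  have hd0 : 0 < N.card := Finset.card_pos.2 hN
  have hsum : ∑ t ∈ N, g t ≤ N.card • N.sup' hN g :=
    Finset.sum_le_card_nsmul N g _ (fun t ht => Finset.le_sup' g ht)
  rw [nsmul_eq_mul] at hsum
  have hdr : (0:ℝ) < (N.card : ℝ) := by exact_mod_cast hd0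
  rw [div_mul_eq_mul_div, one_mul, div_le_iff₀ hdr]
  linarith [hsum]

lemma sggProgress_le_sup {V : Type*} [Fintype V] [DecidableEq V]
    (G : SimpleGraph V) [DecidableRel G.Adj] (a : V → ℝ) (s : V)
    (hs : (G.neighborFinset s).Nonempty) (p : ℝ) (hp : 0 ≤ p) (hp1 : p ≤ 1) :
    sggProgress G a s p ≤ (G.neighborFinset s).sup' hs (fun t => (a s - a t) ^ 2) := by
  have h1p : (0:ℝ) ≤ 1 - p := by linarith
  set N := G.neighborFinset s
  set d := N.card
  set g : V → ℝ := fun t => (a s - a t) ^ 2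
  set M := N.sup' hs g with hM
  have key : sggProgress G a s p ≤
      (∑ m ∈ Finset.Icc 1 d, p ^ m * (1 - p) ^ (d - m) * (d.choose m : ℝ)) * M
        + (1 - p) ^ d * M := by
    rw [sggProgress, Finset.sum_mul]
    refine add_le_add (Finset.sum_le_sum fun m hm => ?_) ?_
    · rw [Finset.mem_Icc] at hm
      obtain ⟨k, rfl⟩ : ∃ k, m = k + 1 := ⟨m - 1, (Nat.succ_pred_eq_of_pos hm.1).symm⟩
      have hw : (0:ℝ) ≤ p ^ (k+1) * (1 - p) ^ (d - (k+1)) := by positivity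
      calc p ^ (k+1) * (1 - p) ^ (d - (k+1)) * ∑ S ∈ N.powersetCard (k+1), finsetMax g S
          ≤ p ^ (k+1) * (1 - p) ^ (d - (k+1)) * ((d.choose (k+1) : ℝ) * M) :=
            mul_le_mul_of_nonneg_left (sum_max_le_choose_max N hs g k) hw
        _ = p ^ (k+1) * (1 - p) ^ (d - (k+1)) * (d.choose (k+1) : ℝ) * M := by ring
    · calc (1 - p) ^ d * (1 / (d : ℝ)) * ∑ t ∈ N, g t
          = (1 - p) ^ d * ((1 / (d : ℝ)) * ∑ t ∈ N, g t) := by ring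
        _ ≤ (1 - p) ^ d * M :=
            mul_le_mul_of_nonneg_left (avg_le_sup N hs g) (by positivity)
  calc sggProgress G a s p
      ≤ (∑ m ∈ Finset.Icc 1 d, p ^ m * (1 - p) ^ (d - m) * (d.choose m : ℝ)) * M
        + (1 - p) ^ d * M := key
    _ = ((∑ m ∈ Finset.Icc 1 d, p ^ m * (1 - p) ^ (d - m) * (d.choose m : ℝ))
        + (1 - p) ^ d) * M := by ring
    _ = M := by rw [binom_split p d, one_mul]

lemma avg_le_sggProgress {V : Type*} [Fintype V] [DecidableEq V]
    (G : SimpleGraph V) [DecidableRel G.Adj] (a : V → ℝ) (s : V)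
    (hs : (G.neighborFinset s).Nonempty) (p : ℝ) (hp : 0 ≤ p) (hp1 : p ≤ 1) :
    (1 / ((G.neighborFinset s).card : ℝ)) * ∑ t ∈ G.neighborFinset s, (a s - a t) ^ 2
      ≤ sggProgress G a s p := by
  have h1p : (0:ℝ) ≤ 1 - p := by linarith
  set N := G.neighborFinset s
  set d := N.card
  set g : V → ℝ := fun t => (a s - a t) ^ 2
  set A := (1 / (d : ℝ)) * ∑ t ∈ N, g t with hA
  have hg : ∀ t ∈ N, 0 ≤ g t := fun t _ => sq_nonneg _
  have key : (∑ m ∈ Finset.Icc 1 d, p ^ m * (1 - p) ^ (d - m) * (d.choose m : ℝ)) * A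
        + (1 - p) ^ d * A ≤ sggProgress G a s p := by
    rw [sggProgress, Finset.sum_mul]
    refine add_le_add (Finset.sum_le_sum fun m hm => ?_) ?_
    · rw [Finset.mem_Icc] at hm
      obtain ⟨k, rfl⟩ : ∃ k, m = k + 1 := ⟨m - 1, (Nat.succ_pred_eq_of_pos hm.1).symm⟩
      have hw : (0:ℝ) ≤ p ^ (k+1) * (1 - p) ^ (d - (k+1)) := by positivity
      calc p ^ (k+1) * (1 - p) ^ (d - (k+1)) * (d.choose (k+1) : ℝ) * A
          = p ^ (k+1) * (1 - p) ^ (d - (k+1)) * ((d.choose (k+1) : ℝ) * A) := by ring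
        _ ≤ p ^ (k+1) * (1 - p) ^ (d - (k+1)) * ∑ S ∈ N.powersetCard (k+1), finsetMax g S :=
            mul_le_mul_of_nonneg_left (choose_avg_le_sum_max N g hg k hm.2) hw
    · exact le_of_eq (by rw [hA]; ring)
  calc A = ((∑ m ∈ Finset.Icc 1 d, p ^ m * (1 - p) ^ (d - m) * (d.choose m : ℝ))
        + (1 - p) ^ d) * A := by rw [binom_split p d, one_mul]
    _ = (∑ m ∈ Finset.Icc 1 d, p ^ m * (1 - p) ^ (d - m) * (d.choose m : ℝ)) * A
        + (1 - p) ^ d * A := by ring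
    _ ≤ sggProgress G a s p := key

/-- The network-wide expected one-step reduction of the squared consensus error
under sample greedy gossip is sandwiched between that of randomised gossip and
that of greedy gossip. -/
theorem sum_sggProgress_sandwich
    {V : Type*} [Fintype V] [DecidableEq V]
    (G : SimpleGraph V) [DecidableRel G.Adj] (a : V → ℝ)
    (hN : ∀ s : V, (G.neighborFinset s).Nonempty)
    (p : ℝ) (hp : 0 ≤ p) (hp1 : p ≤ 1) :
    (1 / (2 * (Fintype.card V : ℝ))) *
        ∑ s : V, (1 / ((G.neighborFinset s).card : ℝ)) *
          ∑ t ∈ G.neighborFinset s, (a s - a t) ^ 2 ≤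
      (1 / (2 * (Fintype.card V : ℝ))) * ∑ s : V, sggProgress G a s p ∧
    (1 / (2 * (Fintype.card V : ℝ))) * ∑ s : V, sggProgress G a s p ≤
      (1 / (2 * (Fintype.card V : ℝ))) *
        ∑ s : V, (G.neighborFinset s).sup' (hN s) (fun t => (a s - a t) ^ 2) := by
  have hc : (0:ℝ) ≤ 1 / (2 * (Fintype.card V : ℝ)) := by positivity
  constructor
  · exact mul_le_mul_of_nonneg_left
      (Finset.sum_le_sum fun s _ => avg_le_sggProgress G a s (hN s) p hp hp1) hc
  · exact mul_le_mul_of_nonneg_left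
      (Finset.sum_le_sum fun s _ => sggProgress_le_sup G a s (hN s) p hp hp1) hc
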